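/- Let a ∈ ℝ₊^n be a probability vector (entrywise nonnegative with ∑_ℓ a_ℓ = 1) and b ∈ ℝ₊^n an arbitrary nonnegative vector. Define the (unnormalized) relative entropy D(a‖b) = ∑_{ℓ=1}^n (b_ℓ - a_ℓ + a_ℓ·ln(a_ℓ/b_ℓ)) with the conventions 0·ln 0 = 0 and that a term is +∞ if a_ℓ > 0 and b_ℓ = 0. Then D(a‖b) ≥ ‖a - b‖₁ - ln(1 + ‖a - b‖₁). -/

import Mathlib

/-- One term of the unnormalized relative entropy `ρ(a‖b) = b - a + a·ln(a/b)`,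
with the conventions `0·ln 0 = 0` and the term being `+∞` if `a > 0` and `b = 0`. -/
noncomputable def relEntTerm (a b : ℝ) : EReal :=
  if 0 < a ∧ b = 0 then ⊤ else ((b - a + a * Real.log (a / b) : ℝ) : EReal)

/-!
With `t = |a - b| / a`, each term satisfies `b - a + a log(a/b) ≥ |a - b| - a log(1 + t)`:
with equality when `b ≥ a`, and for `b < a` this is `2u ≤ log(1 + u) - log(1 - u)` with
`u = (a - b) / a`, read off the power series. Summing, Jensen's inequality for `log` with the
weights `a` bounds `∑ a log(1 + t)` by `log(1 + ‖a - b‖₁)`. Where `a = 0` the junk value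
`|b| / 0 = 0` makes the bound read `b ≥ b`.
-/

open Real Finset

@[norm_cast]
lemma EReal.coe_finset_sum {ι : Type*} (s : Finset ι) (f : ι → ℝ) :
    ((∑ i ∈ s, f i : ℝ) : EReal) = ∑ i ∈ s, (f i : EReal) :=
  map_sum (⟨⟨(↑), EReal.coe_zero⟩, EReal.coe_add⟩ : ℝ →+ EReal) f s

lemma two_mul_le_log_one_add_sub_log_one_sub {u : ℝ} (hu₀ : 0 ≤ u) (hu₁ : u < 1) :
    2 * u ≤ log (1 + u) - log (1 - u) := by
  have hsum := hasSum_log_sub_log_of_abs_lt_one (by rwa [abs_of_nonneg hu₀])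
  simpa using le_hasSum hsum 0 fun k _ => by positivity

lemma abs_sub_sub_mul_log_le {x y : ℝ} (hx : 0 ≤ x) (hy : 0 ≤ y) (hxy : 0 < x → 0 < y) :
    |x - y| - x * log (1 + |x - y| / x) ≤ y - x + x * log (x / y) := by
  rcases hx.eq_or_lt with rfl | hx
  · simp [abs_of_nonneg hy]
  have hy := hxy hx
  rcases le_or_gt x y with hle | hlt
  · have h : 1 + |x - y| / x = (x / y)⁻¹ := by
      rw [abs_of_nonpos (by linarith)]; field_simp; ring
    rw [h, log_inv, abs_of_nonpos (by linarith)]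
    linarith
  · set u := (x - y) / x with hu
    have hu₀ : 0 ≤ u := div_nonneg (by linarith) hx.le
    have hu₁ : u < 1 := (div_lt_one hx).2 (by linarith)
    have h1 : 1 - u = (x / y)⁻¹ := by rw [hu]; field_simp; ring
    have hxu : x * u = x - y := by rw [hu]; field_simp
    rw [abs_of_pos (by linarith), ← hu, ← inv_inv (x / y), log_inv, ← h1]
    nlinarith [two_mul_le_log_one_add_sub_log_one_sub hu₀ hu₁]

lemma sum_mul_log_one_add_div_le {ι : Type*} {s : Finset ι} {w p : ι → ℝ}
    (hw : ∀ i ∈ s, 0 ≤ w i) (hw₁ : ∑ i ∈ s, w i = 1) (hp : ∀ i ∈ s, 0 ≤ p i) :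
    ∑ i ∈ s, w i * log (1 + p i / w i) ≤ log (1 + ∑ i ∈ s, p i) := by
  have hpos : ∀ i ∈ s, 1 + p i / w i ∈ Set.Ioi 0 := fun i hi =>
    add_pos_of_pos_of_nonneg one_pos (div_nonneg (hp i hi) (hw i hi))
  have hmean : ∑ i ∈ s, w i • (1 + p i / w i) = 1 + ∑ i ∈ s, w i * (p i / w i) := by
    simp only [smul_eq_mul, mul_add, mul_one, sum_add_distrib, hw₁]
  have hcancel : ∀ i ∈ s, w i * (p i / w i) ≤ p i := fun i hi => by
    rcases (hw i hi).eq_or_lt with h | h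
    · simp [← h, hp i hi]
    · rw [mul_div_cancel₀ _ h.ne']
  calc ∑ i ∈ s, w i * log (1 + p i / w i)
      ≤ log (∑ i ∈ s, w i • (1 + p i / w i)) :=
        strictConcaveOn_log_Ioi.concaveOn.le_map_sum hw hw₁ hpos
    _ ≤ log (1 + ∑ i ∈ s, p i) := by
      rw [hmean]
      have : 0 ≤ ∑ i ∈ s, w i * (p i / w i) :=
        sum_nonneg fun i hi => mul_nonneg (hw i hi) (div_nonneg (hp i hi) (hw i hi))
      exact log_le_log (by positivity) (by gcongr with i hi; exact hcancel i hi)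

lemma coe_abs_sub_sub_mul_log_le_relEntTerm {x y : ℝ} (hx : 0 ≤ x) (hy : 0 ≤ y) :
    ((|x - y| - x * log (1 + |x - y| / x) : ℝ) : EReal) ≤ relEntTerm x y := by
  unfold relEntTerm
  split_ifs with h
  · exact le_top
  · refine EReal.coe_le_coe_iff.2 (abs_sub_sub_mul_log_le hx hy fun hx' => ?_)
    exact hy.lt_of_ne fun hy' => h ⟨hx', hy'.symm⟩

/-- Generalized Pinsker inequality: `D(a‖b) ≥ ‖a - b‖₁ - ln(1 + ‖a - b‖₁)` for a
probability vector `a` and an arbitrary nonnegative vector `b`. -/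
theorem generalized_pinsker {n : ℕ} (a b : Fin n → ℝ)
    (ha : ∀ ℓ, 0 ≤ a ℓ) (hb : ∀ ℓ, 0 ≤ b ℓ) (hsum : ∑ ℓ, a ℓ = 1) :
    (((∑ ℓ, |a ℓ - b ℓ|) - Real.log (1 + ∑ ℓ, |a ℓ - b ℓ|) : ℝ) : EReal) ≤
      ∑ ℓ, relEntTerm (a ℓ) (b ℓ) := by
  have hjensen := sum_mul_log_one_add_div_le (fun ℓ _ => ha ℓ) hsum
    (fun ℓ _ => abs_nonneg (a ℓ - b ℓ))
  calc (((∑ ℓ, |a ℓ - b ℓ|) - Real.log (1 + ∑ ℓ, |a ℓ - b ℓ|) : ℝ) : EReal)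
      ≤ ((∑ ℓ, (|a ℓ - b ℓ| - a ℓ * log (1 + |a ℓ - b ℓ| / a ℓ)) : ℝ) : EReal) := by
        rw [sum_sub_distrib]
        exact EReal.coe_le_coe_iff.2 (by linarith)
    _ ≤ ∑ ℓ, relEntTerm (a ℓ) (b ℓ) := by
        rw [EReal.coe_finset_sum]
        exact sum_le_sum fun ℓ _ => coe_abs_sub_sub_mul_log_le_relEntTerm (ha ℓ) (hb ℓ)
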